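/- Let N ≥ 3, let a : ℝ → (0,∞)^{2N} be a differentiable solution of the periodic Volterra lattice equations ȧ_j = a_j(a_{j+1} − a_{j−1}), and fix n ≥ 1. Define the local conserved fields Q_j^{[n]}(t) = (−1)^n (L(a(t))^{2n})_{j,j} and the local currents J_j^{[n]}(t) = (−1)^{n+1} ( (L(a(t))^{2n})_{j,j+2} √(a_j(t) a_{j+1}(t)) + (L(a(t))^{2n})_{j−1,j+1} √(a_{j−1}(t) a_j(t)) ). Then the discrete local conservation law d/dt Q_j^{[n]}(t) = J_j^{[n]}(t) − J_{j−1}^{[n]}(t) holds for every j (indices mod 2N) and every t. -/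

import Mathlib

open Matrix

instance neZeroTwoMul (N : ℕ) [NeZero N] : NeZero (2 * N) :=
  ⟨by have := NeZero.ne N; omega⟩

/-- `Emat N r s` is the `2N × 2N` real matrix with a `1` in position `(r, s)`
and zeros elsewhere, indices taken mod `2N`. -/
noncomputable def Emat (N : ℕ) [NeZero N] (r s : ZMod (2 * N)) :
    Matrix (ZMod (2 * N)) (ZMod (2 * N)) ℝ :=
  Matrix.single r s 1

/-- The antisymmetric Lax matrix of the Volterra lattice:
`L(a) = ∑ j, √(a j) • (E_{j,j+1} - E_{j+1,j})`. -/
noncomputable def LaxL (N : ℕ) [NeZero N] (a : ZMod (2 * N) → ℝ) :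
    Matrix (ZMod (2 * N)) (ZMod (2 * N)) ℝ :=
  ∑ j : ZMod (2 * N), Real.sqrt (a j) • (Emat N j (j + 1) - Emat N (j + 1) j)

/-- The local conserved field `Q_j^{[n]}(t) = (−1)^n (L(a(t))^{2n})_{j,j}`. -/
noncomputable def Qfield (N : ℕ) [NeZero N] (n : ℕ) (a : ZMod (2 * N) → ℝ)
    (j : ZMod (2 * N)) : ℝ :=
  (-1 : ℝ) ^ n * (LaxL N a ^ (2 * n)) j j

/-- The local current
`J_j^{[n]}(t) = (−1)^{n+1} ((L^{2n})_{j,j+2} √(a_j a_{j+1}) + (L^{2n})_{j−1,j+1} √(a_{j−1} a_j))`. -/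
noncomputable def Jcurrent (N : ℕ) [NeZero N] (n : ℕ) (a : ZMod (2 * N) → ℝ)
    (j : ZMod (2 * N)) : ℝ :=
  (-1 : ℝ) ^ (n + 1) *
    ((LaxL N a ^ (2 * n)) j (j + 2) * Real.sqrt (a j * a (j + 1))
      + (LaxL N a ^ (2 * n)) (j - 1) (j + 1) * Real.sqrt (a (j - 1) * a j))

/-! The Volterra lattice is the Lax equation `L̇ = ⁅B, L⁆` for `L = L(a)` and the skew-symmetric
matrix `B` with `B_{j,j+2} = -√(a_j a_{j+1}) / 2`, so `d/dt L^{2n} = ⁅B, L^{2n}⁆`. Because `L` is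
skew-symmetric, `L^{2n}` is symmetric, and the diagonal entry of `⁅B, L^{2n}⁆` at `j` becomes
`2 (B_{j,j+2} (L^{2n})_{j,j+2} - B_{j-2,j} (L^{2n})_{j-2,j})`: a quantity at `j` minus the same
quantity at `j - 1`, which is `J_j - J_{j-1}` after the middle terms of the currents cancel. -/

namespace Matrix

section Band

variable {R α : Type*} [AddCommGroup R] [DecidableEq R]

def band [Zero α] (c : R → α) (k : R) : Matrix R R α :=
  of fun p q => if p + k = q then c p else 0

@[simp]
theorem band_apply [Zero α] (c : R → α) (k p q : R) :
    band c k p q = if p + k = q then c p else 0 := rfl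

theorem transpose_band [Zero α] (c : R → α) (k : R) :
    (band c k)ᵀ = band (fun p => c (p - k)) (-k) := by
  ext p q
  simp only [transpose_apply, band_apply]
  by_cases h : q + k = p
  · subst h
    simp
  · rw [if_neg h, if_neg]
    rintro rfl
    exact h (by abel)

def skewBand [Ring α] (c : R → α) (k : R) : Matrix R R α :=
  band c k - (band c k)ᵀ

theorem skewBand_transpose [Ring α] (c : R → α) (k : R) :
    (skewBand c k)ᵀ = -skewBand c k := by
  simp [skewBand]

theorem hasDerivAt_band_apply {c : ℝ → R → ℝ} {c' : R → ℝ} {t : ℝ}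
    (hc : ∀ r, HasDerivAt (fun s => c s r) (c' r) t) (k p q : R) :
    HasDerivAt (fun s => band (c s) k p q) (band c' k p q) t := by
  simp only [band_apply]
  split_ifs
  exacts [hc p, hasDerivAt_const t 0]

theorem hasDerivAt_skewBand_apply {c : ℝ → R → ℝ} {c' : R → ℝ} {t : ℝ}
    (hc : ∀ r, HasDerivAt (fun s => c s r) (c' r) t) (k p q : R) :
    HasDerivAt (fun s => skewBand (c s) k p q) (skewBand c' k p q) t :=
  (hasDerivAt_band_apply hc k p q).sub (hasDerivAt_band_apply hc k q p)

variable [Fintype R]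

theorem band_eq_sum_single [Semiring α] (c : R → α) (k : R) :
    band c k = ∑ j, c j • single j (j + k) 1 := by
  ext p q
  simp only [band_apply, sum_apply, smul_apply, single_apply, smul_eq_mul, mul_ite, mul_one,
    mul_zero]
  rw [Finset.sum_eq_single p (fun r _ hr => by simp [hr]) (by simp)]
  simp

theorem band_mul_band [NonUnitalNonAssocSemiring α] (c d : R → α) (k l : R) :
    band c k * band d l = band (fun p => c p * d (p + k)) (k + l) := by
  ext p q
  simp only [mul_apply, band_apply, ite_mul, zero_mul, mul_ite, mul_zero]
  rw [Finset.sum_eq_single (p + k) (fun r _ hr => by simp [Ne.symm hr]) (by simp)]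
  simp [add_assoc]

theorem band_mul_apply [NonUnitalNonAssocSemiring α] (c : R → α) (k : R) (M : Matrix R R α)
    (p q : R) : (band c k * M) p q = c p * M (p + k) q := by
  simp only [mul_apply, band_apply, ite_mul, zero_mul]
  rw [Finset.sum_eq_single (p + k) (fun r _ hr => by simp [Ne.symm hr]) (by simp)]
  simp

theorem mul_band_apply [NonUnitalNonAssocSemiring α] (c : R → α) (k : R) (M : Matrix R R α)
    (p q : R) : (M * band c k) p q = M p (q - k) * c (q - k) := by
  simp only [mul_apply, band_apply, mul_ite, mul_zero]
  rw [Finset.sum_eq_single (q - k) (fun r _ hr => by rw [if_neg (by rintro rfl; simp at hr)])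
    (by simp)]
  simp

theorem skewBand_lie_apply_self [CommRing α] (c : R → α) (k : R) {M : Matrix R R α}
    (hM : Mᵀ = M) (j : R) :
    ⁅skewBand c k, M⁆ j j = 2 * (c j * M j (j + k) - c (j - k) * M (j - k) j) := by
  have hsymm (u v : R) : M v u = M u v := congrFun (congrFun hM u) v
  simp only [Ring.lie_def, skewBand, transpose_band, sub_mul, mul_sub, sub_apply, band_mul_apply,
    mul_band_apply, sub_neg_eq_add, add_sub_cancel_right, ← sub_eq_add_neg, hsymm (j + k) j,
    hsymm j (j - k)]
  ring

end Band

section Volterra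

variable {R : Type*} [CommRing R] [DecidableEq R]

noncomputable def volterraLaxB (c : R → ℝ) : Matrix R R ℝ :=
  skewBand (fun p => -(c p * c (p + 1)) / 2) 2

/-- With `c = √a`, the right-hand side is the time derivative of `L(a)` along the lattice. -/
theorem volterraLaxB_lie_skewBand [Fintype R] (c : R → ℝ) :
    ⁅volterraLaxB c, skewBand c 1⁆
      = skewBand (fun p => c p * (c (p + 1) ^ 2 - c (p - 1) ^ 2) / 2) 1 := by
  simp only [Ring.lie_def, volterraLaxB, skewBand, transpose_band, sub_mul, mul_sub, band_mul_band]
  ext p q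
  norm_num only [sub_apply, band_apply]
  -- the bands of shift `±3` cancel, those of shift `±1` combine into the right-hand side
  split_ifs <;> ring_nf

end Volterra

theorem hasDerivAt_mul_apply {ι κ μ : Type*} [Fintype κ] {F : ℝ → Matrix ι κ ℝ}
    {G : ℝ → Matrix κ μ ℝ} {F' : Matrix ι κ ℝ} {G' : Matrix κ μ ℝ} {t : ℝ}
    (hF : ∀ p q, HasDerivAt (fun s => F s p q) (F' p q) t)
    (hG : ∀ p q, HasDerivAt (fun s => G s p q) (G' p q) t) (p : ι) (q : μ) :
    HasDerivAt (fun s => (F s * G s) p q) ((F' * G t + F t * G') p q) t := by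
  simp only [add_apply, mul_apply, ← Finset.sum_add_distrib]
  exact HasDerivAt.fun_sum fun r _ => (hF p r).fun_mul (hG r q)

theorem hasDerivAt_pow_apply_of_lax {ι : Type*} [Fintype ι] [DecidableEq ι]
    {L : ℝ → Matrix ι ι ℝ} {B : Matrix ι ι ℝ} {t : ℝ}
    (hL : ∀ p q, HasDerivAt (fun s => L s p q) (⁅B, L t⁆ p q) t) (m : ℕ) (p q : ι) :
    HasDerivAt (fun s => (L s ^ m) p q) (⁅B, L t ^ m⁆ p q) t := by
  induction m generalizing p q with
  | zero => simpa [Ring.lie_def] using hasDerivAt_const t ((1 : Matrix ι ι ℝ) p q)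
  | succ m ih =>
    rw [pow_succ, show ⁅B, L t ^ m * L t⁆ = ⁅B, L t ^ m⁆ * L t + L t ^ m * ⁅B, L t⁆ by
      simp only [Ring.lie_def]; noncomm_ring]
    exact hasDerivAt_mul_apply ih hL p q

end Matrix

open Matrix

theorem hasDerivAt_sqrt_of_volterra {R : Type*} [Ring R] {a : ℝ → R → ℝ} {t : ℝ} {j : R}
    (hpos : ∀ r, 0 < a t r)
    (hvolt : HasDerivAt (fun s => a s j) (a t j * (a t (j + 1) - a t (j - 1))) t) :
    HasDerivAt (fun s => √(a s j))
      (√(a t j) * (√(a t (j + 1)) ^ 2 - √(a t (j - 1)) ^ 2) / 2) t := by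
  convert hvolt.sqrt (hpos j).ne' using 1
  rw [Real.sq_sqrt (hpos _).le, Real.sq_sqrt (hpos _).le,
    eq_div_iff (by positivity [Real.sqrt_pos.mpr (hpos j)])]
  linear_combination (a t (j + 1) - a t (j - 1)) * Real.mul_self_sqrt (hpos j).le

theorem laxL_eq_skewBand (N : ℕ) [NeZero N] (a : ZMod (2 * N) → ℝ) :
    LaxL N a = skewBand (fun j => √(a j)) 1 := by
  simp only [LaxL, Emat, skewBand, band_eq_sum_single, smul_sub, Finset.sum_sub_distrib,
    transpose_sum, transpose_smul, transpose_single]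

theorem volterra_local_conservation_general (N : ℕ) [NeZero N] (n : ℕ)
    (a : ℝ → ZMod (2 * N) → ℝ)
    (hpos : ∀ t j, 0 < a t j)
    (hvolt : ∀ t j, HasDerivAt (fun s => a s j) (a t j * (a t (j + 1) - a t (j - 1))) t) :
    ∀ (t : ℝ) (j : ZMod (2 * N)),
      HasDerivAt (fun s => Qfield N n (a s) j)
        (Jcurrent N n (a t) j - Jcurrent N n (a t) (j - 1)) t := by
  intro t j
  simp only [Qfield, Jcurrent, laxL_eq_skewBand]
  set c : ZMod (2 * N) → ℝ := fun r => √(a t r)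
  have hlax (p q : ZMod (2 * N)) : HasDerivAt (fun s => skewBand (fun r => √(a s r)) 1 p q)
      (⁅volterraLaxB c, skewBand c 1⁆ p q) t := by
    rw [volterraLaxB_lie_skewBand]
    exact hasDerivAt_skewBand_apply
      (fun r => hasDerivAt_sqrt_of_volterra (hpos t) (hvolt t r)) 1 p q
  have hsymm : (skewBand c 1 ^ (2 * n))ᵀ = skewBand c 1 ^ (2 * n) := by
    rw [transpose_pow, skewBand_transpose, (even_two_mul n).neg_pow]
  have hQ := (hasDerivAt_pow_apply_of_lax hlax (2 * n) j j).const_mul ((-1 : ℝ) ^ n)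
  rw [volterraLaxB, skewBand_lie_apply_self _ _ hsymm] at hQ
  refine hQ.congr_deriv ?_
  rw [sub_add_cancel, show j - 1 + 2 = j + 1 by ring, show j - 1 - 1 = j - 2 by ring,
    show j - 2 + 1 = j - 1 by ring]
  simp only [c, Real.sqrt_mul (hpos t _).le]
  ring

/-- The discrete local conservation law `d/dt Q_j^{[n]} = J_j^{[n]} − J_{j−1}^{[n]}`
along any differentiable positive solution of the periodic Volterra lattice. -/
theorem volterra_local_conservation (N : ℕ) [NeZero N] (hN : 3 ≤ N) (n : ℕ) (hn : 1 ≤ n)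
    (a : ℝ → ZMod (2 * N) → ℝ)
    (hpos : ∀ t j, 0 < a t j)
    (hvolt : ∀ t j, HasDerivAt (fun s => a s j) (a t j * (a t (j + 1) - a t (j - 1))) t) :
    ∀ (t : ℝ) (j : ZMod (2 * N)),
      HasDerivAt (fun s => Qfield N n (a s) j)
        (Jcurrent N n (a t) j - Jcurrent N n (a t) (j - 1)) t :=
  volterra_local_conservation_general N n a hpos hvolt
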